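/- No one-way universal blind one-counter automaton (1U1BCA) over the alphabet {a,b,c,d,e} recognizes the language L = (complement of EQ* within {a,b}*) ∪ EQ³, i.e., there is no 1U1BCA whose set of accepted strings among {a,b,c,d,e}* equals L. -/

import Mathlib

/-- Input symbols extended with the left (`cent`) and right (`dollar`) end-markers. -/
inductive TSym (α : Type) : Type
  | cent : TSym α
  | letter : α → TSym α
  | dollar : TSym α

/-- The tape content `¢ w $` for an input word `w`. -/
def tagged {α : Type} (w : List α) : List (TSym α) :=
  TSym.cent :: (w.map TSym.letter ++ [TSym.dollar])

/-- A one-way universal (nondeterministic, with universal acceptance) blind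
one-counter automaton. -/
structure OneU1BCA (α : Type) where
  Q : Type
  [fintypeQ : Fintype Q]
  q0 : Q
  acc : Set Q
  m : ℕ
  Δ : Q → TSym α → Q → ℤ → Prop
  bound : ∀ q σ q' c, Δ q σ q' c → |c| ≤ (m : ℤ)
  total : ∀ q σ, ∃ q' c, Δ q σ q' c

namespace OneU1BCA

variable {α : Type} (M : OneU1BCA α)

/-- The set of configurations reachable in one step from some configuration in `S`. -/
def stepU (S : Set (M.Q × ℤ)) (σ : TSym α) : Set (M.Q × ℤ) :=
  {p' | ∃ p ∈ S, ∃ c : ℤ, M.Δ p.1 σ p'.1 c ∧ p'.2 = p.2 + c}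

/-- The set of configurations reachable after reading `¢ w $`. -/
def reach (w : List α) : Set (M.Q × ℤ) :=
  (tagged w).foldl M.stepU {(M.q0, 0)}

/-- Universal acceptance: every computation path ends in an accepting state with
counter value exactly `0`. -/
def accepts (w : List α) : Prop :=
  ∀ p ∈ M.reach w, p.1 ∈ M.acc ∧ p.2 = 0

/-- `M` recognizes `L` if it accepts exactly the members of `L`. -/
def recognizes (L : Set (List α)) : Prop :=
  ∀ w : List α, M.accepts w ↔ w ∈ L

end OneU1BCA

/-- The alphabet `{a, b, c, d, e}`. -/
inductive Γ5 : Type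
  | a : Γ5
  | b : Γ5
  | c : Γ5
  | d : Γ5
  | e : Γ5
deriving DecidableEq

/-- The language `EQ = { a^n b^n : n > 0 }` over `{a,b,c,d,e}`. -/
def EQab : Language Γ5 :=
  {w | ∃ n : ℕ, 0 < n ∧ w = List.replicate n Γ5.a ++ List.replicate n Γ5.b}

/-- The Kleene closure `EQ*`. -/
def EQabStar : Language Γ5 := KStar.kstar EQab

/-- The complement of `EQ*` within `{a,b}*`. -/
def coEQstar : Set (List Γ5) :=
  {w | (∀ x ∈ w, x = Γ5.a ∨ x = Γ5.b) ∧ w ∉ EQabStar}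

/-- The language `EQ³ = { c^n d^n e^n : n ≥ 0 }`. -/
def EQ3 : Set (List Γ5) :=
  {w | ∃ n : ℕ, w = List.replicate n Γ5.c ++ List.replicate n Γ5.d ++ List.replicate n Γ5.e}

/-- The language `L = (complement of EQ* within {a,b}*) ∪ EQ³`. -/
def LangL : Set (List Γ5) := coEQstar ∪ EQ3

/-!
A universal blind counter automaton rejecting `a^n b^n` has, for every `n`, a rejecting run; cut
it after the `a`-block at configuration `(p n, u n)`. Infinitely many of the `p n` coincide. Since
the counter is never tested, the suffix of the run of `a^j b^j` can be replayed after the prefix of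
`a^i b^i` for `i ≠ j`, with the counter shifted by `u i - u j`; as `a^i b^j` is accepted, that run
ends accepting at `0`. Comparing three indices with the same `p` forces `u i = u j`, so the
replayed run is the original rejecting one, which is then accepting.
-/

attribute [instance] OneU1BCA.fintypeQ

namespace OneU1BCA

variable {α : Type} (M : OneU1BCA α)

def readPrefix (x : List α) : Set (M.Q × ℤ) :=
  (TSym.cent :: x.map TSym.letter).foldl M.stepU {(M.q0, 0)}

def readSuffix (y : List α) (S : Set (M.Q × ℤ)) : Set (M.Q × ℤ) :=
  (y.map TSym.letter ++ [TSym.dollar]).foldl M.stepU S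

theorem reach_append (x y : List α) : M.reach (x ++ y) = M.readSuffix y (M.readPrefix x) := by
  simp [reach, readPrefix, readSuffix, tagged, List.foldl_append]

theorem stepU_mono {S T : Set (M.Q × ℤ)} (h : S ⊆ T) (σ : TSym α) :
    M.stepU S σ ⊆ M.stepU T σ := by
  rintro p' ⟨p, hp, c, hΔ, hv⟩
  exact ⟨p, h hp, c, hΔ, hv⟩

theorem foldl_stepU_mono (l : List (TSym α)) {S T : Set (M.Q × ℤ)} (h : S ⊆ T) :
    l.foldl M.stepU S ⊆ l.foldl M.stepU T := by
  induction l generalizing S T with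
  | nil => exact h
  | cons σ l ih => exact ih (M.stepU_mono h σ)

theorem foldl_stepU_shift (l : List (TSym α)) {S : Set (M.Q × ℤ)} {q : M.Q} {v : ℤ} (t : ℤ)
    (h : (q, v) ∈ l.foldl M.stepU S) :
    (q, v + t) ∈ l.foldl M.stepU ((fun p => (p.1, p.2 + t)) '' S) := by
  induction l generalizing S with
  | nil => exact ⟨(q, v), h, rfl⟩
  | cons σ l ih =>
    refine M.foldl_stepU_mono l ?_ (ih h)
    rintro _ ⟨p', ⟨p, hp, c, hΔ, hv⟩, rfl⟩
    exact ⟨(p.1, p.2 + t), ⟨p, hp, rfl⟩, c, hΔ, by simp only [hv]; ring⟩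

theorem exists_mem_foldl_stepU_singleton (l : List (TSym α)) {S : Set (M.Q × ℤ)}
    {r : M.Q × ℤ} (h : r ∈ l.foldl M.stepU S) : ∃ p ∈ S, r ∈ l.foldl M.stepU {p} := by
  induction l generalizing S with
  | nil => exact ⟨r, h, rfl⟩
  | cons σ l ih =>
    obtain ⟨p', ⟨p, hp, c, hΔ, hv⟩, hr⟩ := ih h
    refine ⟨p, hp, M.foldl_stepU_mono l ?_ hr⟩
    rintro _ rfl
    exact ⟨p, rfl, c, hΔ, hv⟩

theorem exists_rejecting_split {x y : List α} (h : ¬ M.accepts (x ++ y)) :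
    ∃ p ∈ M.readPrefix x, ∃ r ∈ M.readSuffix y {p}, ¬ (r.1 ∈ M.acc ∧ r.2 = 0) := by
  simp only [accepts, reach_append, not_forall, exists_prop] at h
  obtain ⟨r, hr, hrej⟩ := h
  obtain ⟨p, hp, hr⟩ := M.exists_mem_foldl_stepU_singleton _ hr
  exact ⟨p, hp, r, hr, hrej⟩

theorem accepts_append_transplant {x y : List α} (h : M.accepts (x ++ y)) {p q : M.Q}
    {u u' v : ℤ} (hp : (p, u) ∈ M.readPrefix x) (hr : (q, v) ∈ M.readSuffix y {(p, u')}) :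
    q ∈ M.acc ∧ v + (u - u') = 0 := by
  have hshift := M.foldl_stepU_shift _ (u - u') hr
  rw [Set.image_singleton, show u' + (u - u') = u by ring] at hshift
  have hreach : (q, v + (u - u')) ∈ M.reach (x ++ y) := by
    rw [reach_append]
    exact M.foldl_stepU_mono _ (Set.singleton_subset_iff.2 hp) hshift
  exact h _ hreach

theorem exists_accepts_append_diag {ι : Type*} [Infinite ι] (x y : ι → List α)
    (h : ∀ i j, i ≠ j → M.accepts (x i ++ y j)) : ∃ i, M.accepts (x i ++ y i) := by
  by_contra! hrej
  choose p hp r hr hbad using fun i => M.exists_rejecting_split (hrej i)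
  obtain ⟨s, hs⟩ := Finite.exists_infinite_fiber fun i => (p i).1
  set f := Infinite.natEmbedding ((fun i => (p i).1) ⁻¹' {s})
  have hstate : ∀ n, (p (f n)).1 = s := fun n => (f n).2
  have hne : ∀ m n, m ≠ n → (f m : ι) ≠ f n := fun m n hmn h =>
    hmn (f.injective (Subtype.ext h))
  have hcross : ∀ m n, m ≠ n →
      (r (f n)).1 ∈ M.acc ∧ (r (f n)).2 + ((p (f m)).2 - (p (f n)).2) = 0 := by
    intro m n hmn
    have hpm : p (f m) = (s, (p (f m)).2) := Prod.ext (hstate m) rfl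
    have hpn : p (f n) = (s, (p (f n)).2) := Prod.ext (hstate n) rfl
    have hrn := hr (f n)
    rw [hpn] at hrn
    exact M.accepts_append_transplant (h _ _ (hne m n hmn)) (hpm ▸ hp (f m)) hrn
  have h02 := hcross 0 2 (by decide)
  have h12 := hcross 1 2 (by decide)
  obtain ⟨hacc, hzero⟩ := hcross 0 1 (by decide)
  exact hbad (f 1) ⟨hacc, by omega⟩

end OneU1BCA

theorem count_a_eq_count_b_of_mem_EQabStar {w : List Γ5} (hw : w ∈ EQabStar) :
    w.count Γ5.a = w.count Γ5.b := by
  rw [EQabStar, Language.mem_kstar] at hw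
  obtain ⟨L, rfl, hL⟩ := hw
  rw [List.count_flatten, List.count_flatten]
  refine congrArg List.sum (List.map_congr_left fun y hy => ?_)
  obtain ⟨n, -, rfl⟩ := hL y hy
  simp [List.count_replicate]

theorem replicate_append_replicate_mem_LangL {i j : ℕ} (hij : i ≠ j) :
    List.replicate i Γ5.a ++ List.replicate j Γ5.b ∈ LangL := by
  refine Or.inl ⟨fun x hx => ?_, fun h => hij ?_⟩
  · rcases List.mem_append.1 hx with h | h
    · exact Or.inl (List.eq_of_mem_replicate h)
    · exact Or.inr (List.eq_of_mem_replicate h)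
  · simpa [List.count_replicate] using count_a_eq_count_b_of_mem_EQabStar h

theorem replicate_append_replicate_notMem_LangL {n : ℕ} (hn : 0 < n) :
    List.replicate n Γ5.a ++ List.replicate n Γ5.b ∉ LangL := by
  rintro (⟨-, h⟩ | ⟨k, hk⟩)
  · refine h (Language.mem_kstar.2 ⟨[_], List.flatten_singleton.symm, ?_⟩)
    rintro y hy
    exact (List.mem_singleton.1 hy) ▸ ⟨n, hn, rfl⟩
  · have := congrArg (List.count Γ5.a) hk
    simp only [List.count_append, List.count_replicate_self, List.count_replicate, beq_iff_eq,
      reduceCtorEq, ↓reduceIte, add_zero] at this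
    omega

/-- no 1U1BCA recognizes `L = (complement of EQ* within {a,b}*) ∪ EQ³`. -/
theorem stmt17 : ¬ ∃ M : OneU1BCA Γ5, M.recognizes LangL := by
  rintro ⟨M, hM⟩
  obtain ⟨n, hn⟩ := M.exists_accepts_append_diag
    (fun i => List.replicate (i + 1) Γ5.a) (fun j => List.replicate (j + 1) Γ5.b)
    fun i j hij => (hM _).2 (replicate_append_replicate_mem_LangL (by omega))
  exact replicate_append_replicate_notMem_LangL n.succ_pos ((hM _).1 hn)
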